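/- arXiv:1812.01572 — 3 statements merged into one kernel-verified Lean document; each statement's English description precedes it below -/
import Mathlib

section
/- Let a_0, a_1, N be integers with N > 0 and gcd(a_0, a_1, N) = 1. Then for every ε > 0 there exists a constant C (depending only on ε) such that there exists an integer p_1 with 0 ≤ p_1 ≤ C·N^ε and gcd(a_0 + a_1·p_1, N) = 1. -/
/-!
Only the primes `q ∣ N` matter, and for each of them at most one residue class of `p` mod `q` is
bad. Let `B = ω(N)`. The primes `q ≤ B` are handled at once by `P' = ∏ {q ≤ B prime : q ∤ a₀}`,
which stays good after adding any multiple of `B#`. Among the `B + 1` candidates `P' + k·B#`,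
`0 ≤ k ≤ B`, each of the at most `B` primes `q > B` dividing `N` excludes at most one, so some
`p ≤ (B + 1)·4^B ≤ 8^B` works. Finally `8^ω(N) = O_ε(N^ε)`, because `N` has at most `M` prime
factors `≤ M` and the others give `M^(ω(N) - M) ≤ N`.
-/

open Finset Filter Nat

theorem Int.not_dvd_and_dvd_of_gcd_gcd_eq_one {a b n : ℤ} (h : Int.gcd a (Int.gcd b n) = 1)
    {q : ℕ} (hq : q.Prime) (hqn : (q : ℤ) ∣ n) : ¬ ((q : ℤ) ∣ a ∧ (q : ℤ) ∣ b) := by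
  rintro ⟨ha, hb⟩
  have hq1 : (q : ℤ) ∣ (1 : ℕ) := h ▸ Int.dvd_coe_gcd ha (Int.dvd_coe_gcd hb hqn)
  exact hq.ne_one (Nat.dvd_one.mp (Int.natCast_dvd_natCast.mp hq1))

theorem Int.gcd_eq_one_of_forall_prime_not_dvd {x : ℤ} {n : ℕ}
    (h : ∀ q : ℕ, q.Prime → q ∣ n → ¬ (q : ℤ) ∣ x) : Int.gcd x n = 1 :=
  Nat.coprime_of_dvd fun q hq hqx hqn => h q hq hqn (Int.natCast_dvd.mpr hqx)

theorem pow_card_primeFactors_sub_le {M n : ℕ} (hM : 0 < M) (hn : n ≠ 0) :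
    M ^ (#n.primeFactors - M) ≤ n := by
  have hsmall : #{q ∈ n.primeFactors | q ≤ M} ≤ M := by
    refine (card_le_card fun q hq => ?_).trans (Nat.card_Icc 1 M).le
    obtain ⟨hqn, hqM⟩ := mem_filter.mp hq
    exact mem_Icc.mpr ⟨(Nat.prime_of_mem_primeFactors hqn).one_lt.le, hqM⟩
  have hsplit := card_filter_add_card_filter_not (s := n.primeFactors) (· ≤ M)
  set large := {q ∈ n.primeFactors | ¬ q ≤ M}
  calc M ^ (#n.primeFactors - M) ≤ M ^ #large := pow_le_pow_right₀ hM (by omega)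
    _ ≤ ∏ q ∈ large, q := pow_card_le_prod _ _ _ fun q hq => (not_le.mp (mem_filter.mp hq).2).le
    _ ≤ n := Nat.le_of_dvd (Nat.pos_of_ne_zero hn)
      ((prod_dvd_prod_of_subset _ _ _ (filter_subset _ _)).trans (prod_primeFactors_dvd n))

theorem exists_pow_card_primeFactors_le_mul_rpow {b ε : ℝ} (hb : 1 ≤ b) (hε : 0 < ε) :
    ∃ C > 0, ∀ n : ℕ, n ≠ 0 → b ^ #n.primeFactors ≤ C * (n : ℝ) ^ ε := by
  obtain ⟨M, hM, hbM⟩ : ∃ M : ℕ, 0 < M ∧ b ≤ (M : ℝ) ^ ε :=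
    ((eventually_gt_atTop 0).and (((tendsto_rpow_atTop hε).comp
      tendsto_natCast_atTop_atTop).eventually_ge_atTop b)).exists
  refine ⟨b ^ M, by positivity, fun n hn => ?_⟩
  have hMn : ((M ^ (#n.primeFactors - M) : ℕ) : ℝ) ≤ n := by
    exact_mod_cast pow_card_primeFactors_sub_le hM hn
  calc b ^ #n.primeFactors ≤ b ^ (M + (#n.primeFactors - M)) := pow_le_pow_right₀ hb (by omega)
    _ = b ^ M * b ^ (#n.primeFactors - M) := pow_add _ _ _
    _ ≤ b ^ M * ((M : ℝ) ^ ε) ^ (#n.primeFactors - M) := by gcongr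
    _ = b ^ M * ((M ^ (#n.primeFactors - M) : ℕ) : ℝ) ^ ε := by
      rw [Real.rpow_pow_comm (by positivity)]; push_cast; rfl
    _ ≤ b ^ M * (n : ℝ) ^ ε := by gcongr

def primorialCoprime (a : ℤ) (B : ℕ) : ℕ := ∏ r ∈ primesLE B with ¬ ((r : ℕ) : ℤ) ∣ a, r

theorem not_dvd_add_mul_primorialCoprime_add {a₀ a₁ : ℤ} {q B : ℕ} (hq : q.Prime) (hqB : q ≤ B)
    (h : ¬ ((q : ℤ) ∣ a₀ ∧ (q : ℤ) ∣ a₁)) (k : ℤ) :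
    ¬ (q : ℤ) ∣ a₀ + a₁ * (primorialCoprime a₀ B + k * primorial B) := by
  intro hdvd
  have hqB' : q ∈ primesLE B := mem_primesLE.mpr ⟨hqB, hq⟩
  have hqP : (q : ℤ) ∣ primorial B := Int.natCast_dvd_natCast.mpr (dvd_prod_of_mem _ hqB')
  rw [mul_add, ← add_assoc] at hdvd
  have hq' : (q : ℤ) ∣ a₀ + a₁ * primorialCoprime a₀ B :=
    (dvd_add_left ((hqP.mul_left k).mul_left a₁)).mp hdvd
  by_cases ha₀ : (q : ℤ) ∣ a₀
  · rcases (Nat.prime_iff_prime_int.mp hq).dvd_mul.mp ((dvd_add_right ha₀).mp hq') with ha₁ | hqP'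
    · exact h ⟨ha₀, ha₁⟩
    · obtain ⟨r, hr, hqr⟩ :=
        (hq.prime.dvd_finsetProd_iff _).mp (Int.natCast_dvd_natCast.mp hqP')
      obtain ⟨hrB, hra₀⟩ := mem_filter.mp hr
      rw [(Nat.prime_dvd_prime_iff_eq hq (prime_of_mem_primesLE hrB)).mp hqr] at ha₀
      exact hra₀ ha₀
  · have hqP' : (q : ℤ) ∣ primorialCoprime a₀ B :=
      Int.natCast_dvd_natCast.mpr (dvd_prod_of_mem _ (mem_filter.mpr ⟨hqB', ha₀⟩))
    exact ha₀ ((dvd_add_left (hqP'.mul_left a₁)).mp hq')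

theorem card_filter_dvd_add_mul_le_one {c d : ℤ} {q L : ℕ} (hq : q.Prime) (hLq : L < q)
    (h : ¬ ((q : ℤ) ∣ c ∧ (q : ℤ) ∣ d)) :
    #{k ∈ range (L + 1) | (q : ℤ) ∣ c + d * ((k : ℕ) : ℤ)} ≤ 1 := by
  refine card_le_one.mpr fun k hk k' hk' => ?_
  simp only [mem_filter, mem_range] at hk hk'
  have hdiff : (q : ℤ) ∣ d * ((k : ℤ) - k') := by
    rw [show d * ((k : ℤ) - k') = c + d * k - (c + d * k') by ring]
    exact dvd_sub hk.2 hk'.2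
  rcases (Nat.prime_iff_prime_int.mp hq).dvd_mul.mp hdiff with hd | hkk'
  · exact (h ⟨(dvd_add_left (hd.mul_right _)).mp hk.2, hd⟩).elim
  · have := Int.eq_zero_of_abs_lt_dvd hkk' (abs_lt.mpr ⟨by omega, by omega⟩)
    omega

theorem exists_le_card_forall_not_dvd_add_mul {c d : ℤ} (S : Finset ℕ)
    (hS : ∀ q ∈ S, q.Prime ∧ #S < q ∧ ¬ ((q : ℤ) ∣ c ∧ (q : ℤ) ∣ d)) :
    ∃ k ≤ #S, ∀ q ∈ S, ¬ (q : ℤ) ∣ c + d * k := by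
  set bad := S.biUnion fun q => {k ∈ range (#S + 1) | (q : ℤ) ∣ c + d * ((k : ℕ) : ℤ)}
  have hbad : #bad < #(range (#S + 1)) := calc
    #bad ≤ ∑ q ∈ S, #{k ∈ range (#S + 1) | (q : ℤ) ∣ c + d * ((k : ℕ) : ℤ)} := card_biUnion_le
    _ ≤ ∑ _q ∈ S, 1 := sum_le_sum fun q hq =>
      card_filter_dvd_add_mul_le_one (hS q hq).1 (hS q hq).2.1 (hS q hq).2.2
    _ < #(range (#S + 1)) := by simp
  obtain ⟨k, hk, hkbad⟩ := exists_mem_notMem_of_card_lt_card hbad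
  exact ⟨k, Nat.lt_succ_iff.mp (mem_range.mp hk),
    fun q hq hdvd => hkbad (mem_biUnion.mpr ⟨q, hq, mem_filter.mpr ⟨hk, hdvd⟩⟩)⟩

theorem exists_le_eight_pow_gcd_add_mul_eq_one (a₀ a₁ : ℤ) {n : ℕ} (hn : n ≠ 0)
    (h : ∀ q : ℕ, q.Prime → q ∣ n → ¬ ((q : ℤ) ∣ a₀ ∧ (q : ℤ) ∣ a₁)) :
    ∃ p : ℕ, p ≤ 8 ^ #n.primeFactors ∧ Int.gcd (a₀ + a₁ * p) n = 1 := by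
  set B := #n.primeFactors
  set P' := primorialCoprime a₀ B
  set large := {q ∈ n.primeFactors | B < q}
  obtain ⟨k, hkB, hk⟩ := exists_le_card_forall_not_dvd_add_mul
    (c := a₀ + a₁ * P') (d := a₁ * primorial B) large fun q hq => by
      obtain ⟨hqn, hBq⟩ := mem_filter.mp hq
      obtain ⟨hq, hqn, -⟩ := Nat.mem_primeFactors.mp hqn
      refine ⟨hq, (card_filter_le _ _).trans_lt hBq, fun ⟨hc, hd⟩ => ?_⟩
      rcases (Nat.prime_iff_prime_int.mp hq).dvd_mul.mp hd with ha₁ | hqP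
      · exact h q hq hqn ⟨(dvd_add_left (ha₁.mul_right _)).mp hc, ha₁⟩
      · have : q ∈ primesLE B := primeFactors_primorial B ▸
          Nat.mem_primeFactors.mpr ⟨hq, Int.natCast_dvd_natCast.mp hqP, primorial_ne_zero B⟩
        exact absurd (le_of_mem_primesLE this) (not_le.mpr hBq)
  have hkB : k ≤ B := hkB.trans (card_filter_le _ _)
  refine ⟨P' + k * primorial B, ?_, Int.gcd_eq_one_of_forall_prime_not_dvd fun q hq hqn => ?_⟩
  · have hP' : P' ≤ primorial B :=
      Nat.le_of_dvd (primorial_pos B) (prod_dvd_prod_of_subset _ _ _ (filter_subset _ _))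
    calc P' + k * primorial B ≤ (B + 1) * primorial B := by nlinarith
      _ ≤ 2 ^ B * 4 ^ B := Nat.mul_le_mul Nat.lt_two_pow_self (primorial_le_four_pow B)
      _ = 8 ^ B := by rw [← Nat.mul_pow]
  · push_cast
    by_cases hqB : q ≤ B
    · exact not_dvd_add_mul_primorialCoprime_add hq hqB (h q hq hqn) k
    · have hq' := hk q (mem_filter.mpr ⟨Nat.mem_primeFactors.mpr ⟨hq, hqn, hn⟩, not_le.mp hqB⟩)
      rwa [show a₀ + a₁ * P' + a₁ * primorial B * k = a₀ + a₁ * (P' + k * primorial B) by ring]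
        at hq'

/-- For integers `a₀, a₁, N` with `N > 0` and `gcd(a₀, a₁, N) = 1`, for every `ε > 0`
there is a constant `C = C(ε)` such that some integer `p₁` with `0 ≤ p₁ ≤ C·N^ε`
satisfies `gcd(a₀ + a₁·p₁, N) = 1`. -/
theorem stmt_0 :
    ∀ ε : ℝ, 0 < ε → ∃ C : ℝ, 0 < C ∧
      ∀ a₀ a₁ N : ℤ, 0 < N → Int.gcd a₀ (Int.gcd a₁ N : ℤ) = 1 →
        ∃ p₁ : ℤ, 0 ≤ p₁ ∧ (p₁ : ℝ) ≤ C * (N : ℝ) ^ ε ∧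
          Int.gcd (a₀ + a₁ * p₁) N = 1 := by
  intro ε hε
  obtain ⟨C, hC, hbound⟩ := exists_pow_card_primeFactors_le_mul_rpow (b := 8) (by norm_num) hε
  refine ⟨C, hC, fun a₀ a₁ N hN hgcd => ?_⟩
  lift N to ℕ using hN.le
  obtain ⟨p, hp, hcop⟩ := exists_le_eight_pow_gcd_add_mul_eq_one a₀ a₁ (by omega)
    fun q hq hqN => Int.not_dvd_and_dvd_of_gcd_gcd_eq_one hgcd hq (Int.natCast_dvd_natCast.mpr hqN)
  refine ⟨p, by positivity, ?_, hcop⟩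
  calc ((p : ℤ) : ℝ) ≤ 8 ^ #N.primeFactors := by exact_mod_cast hp
    _ ≤ C * ((N : ℤ) : ℝ) ^ ε := by exact_mod_cast hbound N (by omega)
end

section
/- Let D be a quaternion division algebra over Q and let L ⊆ D be a subset closed under multiplication containing 1. Fix an embedding ι of D into M_2(R) (assuming D is indefinite), a point z in the upper half plane, a positive integer L_0, and δ > 0. Define L(m; z, δ) as the set of α ∈ L with reduced norm m and hyperbolic distance u(z, ι(α)·z) ≤ δ. Then the Q-algebra generated by the union of L(m; z, δ) over 1 ≤ m ≤ L_0 is contained in the Q-vector space spanned by the union of L(m; z, 2δ) over 1 ≤ m ≤ L_0². -/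
open Matrix MatrixGroups
open scoped Pointwise

/-!
In a quaternion algebra `a * b + b * a` lies in the span of `1`, `a`, `b`, because
`star a = trace a - a` with a central trace. Since
`2 x y z = ((x y) z + z (x y)) - ((z x) y + y (z x)) + ((y z) x + x (y z))`, a triple product
`x y z` lies in any subspace containing `1, x, y, z, x y, y z, z x`. For `S ∋ 1` this makes
`span (S * S)` closed under multiplication, hence it contains the algebra generated by `S`.
Taking `S = L(≤ L₀; z, δ)`, products of two of its elements have norm `≤ L₀²` (the reduced norm is
multiplicative) and move `z` by at most `2δ` (triangle inequality for the isometric action of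
`GL(2, ℝ)⁺`).
-/

namespace QuaternionAlgebra

open Quaternion

variable {R : Type*} [CommRing R] {c₁ c₂ c₃ : R}

theorem mul_add_mul_eq (a b : ℍ[R,c₁,c₂,c₃]) :
    a * b + b * a = (a + star a) * b + (b + star b) * a - (a * star b + star (a * star b)) := by
  ext <;> simp <;> ring

theorem mul_add_mul_mem_of_mem {V : Submodule R ℍ[R,c₁,c₂,c₃]} {a b : ℍ[R,c₁,c₂,c₃]}
    (h1 : 1 ∈ V) (ha : a ∈ V) (hb : b ∈ V) : a * b + b * a ∈ V := by
  have coe_mul_mem : ∀ (r : R) {x}, x ∈ V → (r : ℍ[R,c₁,c₂,c₃]) * x ∈ V := fun r x hx => by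
    rw [coe_mul_eq_smul]; exact V.smul_mem r hx
  have trace_mem : ∀ x : ℍ[R,c₁,c₂,c₃], x + star x ∈ V := fun x => by
    simpa [self_add_star'] using coe_mul_mem (2 * x.re + c₂ * x.imI) h1
  rw [mul_add_mul_eq, self_add_star', self_add_star']
  exact sub_mem (add_mem (coe_mul_mem _ hb) (coe_mul_mem _ ha)) (trace_mem _)

variable {K : Type*} [Field K] [NeZero (2 : K)] {c₁ c₂ c₃ : K}

theorem mul_mul_mem_of_mul_mem {V : Submodule K ℍ[K,c₁,c₂,c₃]} {x y z : ℍ[K,c₁,c₂,c₃]} (h1 : 1 ∈ V)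
    (hx : x ∈ V) (hy : y ∈ V) (hz : z ∈ V) (hxy : x * y ∈ V) (hyz : y * z ∈ V)
    (hzx : z * x ∈ V) : x * y * z ∈ V := by
  have h2 : (2 : K) • (x * y * z) =
      (x * y * z + z * (x * y)) - (z * x * y + y * (z * x)) + (y * z * x + x * (y * z)) := by
    rw [two_smul]; noncomm_ring
  rw [← V.smul_mem_iff (two_ne_zero (α := K)), h2]
  exact add_mem (sub_mem (mul_add_mul_mem_of_mem h1 hxy hz) (mul_add_mul_mem_of_mem h1 hzx hy))
    (mul_add_mul_mem_of_mem h1 hyz hx)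

theorem span_mul_self_mul_mem {S : Set ℍ[K,c₁,c₂,c₃]} (hS : 1 ∈ S) {u v : ℍ[K,c₁,c₂,c₃]}
    (hu : u ∈ Submodule.span K (S * S)) (hv : v ∈ Submodule.span K (S * S)) :
    u * v ∈ Submodule.span K (S * S) := by
  set V := Submodule.span K (S * S)
  have pair_mem : ∀ a ∈ S, ∀ b ∈ S, a * b ∈ V := fun a ha b hb =>
    Submodule.subset_span (Set.mul_mem_mul ha hb)
  have one_mem : (1 : ℍ[K,c₁,c₂,c₃]) ∈ V := by simpa using pair_mem 1 hS 1 hS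
  have mem : ∀ a ∈ S, a ∈ V := fun a ha => by simpa using pair_mem a ha 1 hS
  have triple_mem : ∀ a ∈ S, ∀ b ∈ S, ∀ c ∈ S, a * b * c ∈ V := fun a ha b hb c hc =>
    mul_mul_mem_of_mul_mem one_mem (mem a ha) (mem b hb) (mem c hc) (pair_mem a ha b hb)
      (pair_mem b hb c hc) (pair_mem c hc a ha)
  have hVV : V * V ≤ V := by
    rw [Submodule.span_mul_span, Submodule.span_le]
    rintro _ ⟨_, ⟨a, ha, b, hb, rfl⟩, _, ⟨c, hc, d, hd, rfl⟩, rfl⟩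
    refine mul_mul_mem_of_mul_mem one_mem (mem a ha) (mem b hb) (pair_mem c hc d hd)
      (pair_mem a ha b hb) ?_ (triple_mem c hc d hd a ha)
    rw [← mul_assoc]
    exact triple_mem b hb c hc d hd
  exact hVV (Submodule.mul_mem_mul hu hv)

theorem adjoin_le_span_mul_self {S : Set ℍ[K,c₁,c₂,c₃]} (hS : 1 ∈ S) :
    Subalgebra.toSubmodule (Algebra.adjoin K S) ≤ Submodule.span K (S * S) := by
  have subset : S ⊆ S * S := fun a ha => by simpa using Set.mul_mem_mul ha hS
  have one_mem : (1 : ℍ[K,c₁,c₂,c₃]) ∈ Submodule.span K (S * S) :=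
    Submodule.subset_span (subset hS)
  exact Algebra.adjoin_le (S := (Submodule.span K (S * S)).toSubalgebra one_mem
    fun _ _ => span_mul_self_mul_mem hS) (subset.trans Submodule.subset_span)

end QuaternionAlgebra

namespace UpperHalfPlane

theorem exists_specialLinearGroup_smul_eq (g : GL(2, ℝ)⁺) :
    ∃ A : SL(2, ℝ), ∀ w : ℍ, A • w = g • w := by
  have hdet : 0 < ((g : GL (Fin 2) ℝ) : Matrix (Fin 2) (Fin 2) ℝ).det := g.prop
  set u : ℝˣ := Units.mk0 (Real.sqrt _) (Real.sqrt_pos.mpr hdet).ne'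
  have hA : (((u⁻¹ : ℝˣ) : ℝ) • ((g : GL (Fin 2) ℝ) : Matrix (Fin 2) (Fin 2) ℝ)).det = 1 := by
    rw [Matrix.det_smul, Fintype.card_fin]
    simp [u, Real.sq_sqrt hdet.le, hdet.ne']
  let A : SL(2, ℝ) := ⟨_, hA⟩
  have hAg : SpecialLinearGroup.mapGL ℝ A = GeneralLinearGroup.scalar (Fin 2) u⁻¹ * g := by
    ext i j
    change (A : Matrix (Fin 2) (Fin 2) ℝ).map (algebraMap ℝ ℝ) i j =
      (Matrix.scalar (Fin 2) ((u⁻¹ : ℝˣ) : ℝ) * ((g : GL (Fin 2) ℝ) : Matrix (Fin 2) (Fin 2) ℝ)) i j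
    simp [A]
  refine ⟨A, fun w => ?_⟩
  rw [MulAction.compHom_smul_def, hAg, mul_smul, glScalar_smul]
  rfl

instance : IsIsometricSMul GL(2, ℝ)⁺ ℍ :=
  ⟨fun g => by
    obtain ⟨A, hA⟩ := exists_specialLinearGroup_smul_eq g
    rw [show (g • · : ℍ → ℍ) = (A • ·) from funext fun w => (hA w).symm]
    exact isometry_smul ℍ A⟩

end UpperHalfPlane

theorem dist_mul_smul_le {G X : Type*} [Monoid G] [PseudoMetricSpace X] [MulAction G X]
    [IsIsometricSMul G X] (g h : G) (x : X) :
    dist x ((g * h) • x) ≤ dist x (g • x) + dist x (h • x) :=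
  calc dist x ((g * h) • x)
      ≤ dist x (g • x) + dist (g • x) (g • h • x) := by rw [mul_smul]; exact dist_triangle _ _ _
    _ = dist x (g • x) + dist x (h • x) := by rw [dist_smul]

section

variable {D : Type*} [Ring D] [StarRing D]

/-- The union of the sets `L(m; z, δ)` over `1 ≤ m ≤ N`: elements of `L` of reduced norm
`α * star α = m` whose image under `ι` moves `z` by at most `δ` in the hyperbolic metric. -/
def normDisplacementSet (L : Set D) (ι : D →+* Matrix (Fin 2) (Fin 2) ℝ) (z : UpperHalfPlane)
    (N : ℕ) (δ : ℝ) : Set D :=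
  {α | α ∈ L ∧ ∃ m : ℕ, 1 ≤ m ∧ m ≤ N ∧ α * star α = (m : D) ∧
    ∃ g : GL(2, ℝ)⁺, (↑(↑g : GL (Fin 2) ℝ) : Matrix (Fin 2) (Fin 2) ℝ) = ι α ∧ dist z (g • z) ≤ δ}

variable {L : Set D} {ι : D →+* Matrix (Fin 2) (Fin 2) ℝ} {z : UpperHalfPlane}

theorem one_mem_normDisplacementSet (h1 : 1 ∈ L) {N : ℕ} (hN : 1 ≤ N) {δ : ℝ} (hδ : 0 ≤ δ) :
    1 ∈ normDisplacementSet L ι z N δ :=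
  ⟨h1, 1, le_rfl, hN, by simp, 1, by simp, by simpa using hδ⟩

theorem mul_mem_normDisplacementSet (hmul : ∀ x ∈ L, ∀ y ∈ L, x * y ∈ L) {N₁ N₂ : ℕ}
    {δ₁ δ₂ : ℝ} {a b : D} (ha : a ∈ normDisplacementSet L ι z N₁ δ₁)
    (hb : b ∈ normDisplacementSet L ι z N₂ δ₂) :
    a * b ∈ normDisplacementSet L ι z (N₁ * N₂) (δ₁ + δ₂) := by
  obtain ⟨haL, m₁, hm₁, hm₁N, hna, g₁, hg₁, hd₁⟩ := ha
  obtain ⟨hbL, m₂, hm₂, hm₂N, hnb, g₂, hg₂, hd₂⟩ := hb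
  have hnorm : a * b * star (a * b) = ((m₁ * m₂ : ℕ) : D) :=
    calc a * b * star (a * b) = a * (b * star b) * star a := by simp only [star_mul, mul_assoc]
      _ = ((m₁ * m₂ : ℕ) : D) := by
        rw [hnb, ← (Nat.cast_commute m₂ a).eq, mul_assoc, hna, Nat.cast_mul, Nat.cast_comm]
  refine ⟨hmul a haL b hbL, m₁ * m₂, Nat.one_le_iff_ne_zero.mpr (by positivity),
    Nat.mul_le_mul hm₁N hm₂N, hnorm, g₁ * g₂, ?_, ?_⟩
  · rw [map_mul, ← hg₁, ← hg₂]
    rfl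
  · exact (dist_mul_smul_le g₁ g₂ z).trans (add_le_add hd₁ hd₂)

end

theorem stmt_4_general (c₁ c₂ : ℚ)
    (ι : QuaternionAlgebra ℚ c₁ 0 c₂ →+* Matrix (Fin 2) (Fin 2) ℝ)
    (L : Set (QuaternionAlgebra ℚ c₁ 0 c₂))
    (h1 : (1 : QuaternionAlgebra ℚ c₁ 0 c₂) ∈ L)
    (hmul : ∀ x ∈ L, ∀ y ∈ L, x * y ∈ L)
    (z : UpperHalfPlane) (L₀ : ℕ) (hL₀ : 0 < L₀) (δ : ℝ) (hδ : 0 < δ) :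
    ∀ x ∈ Algebra.adjoin ℚ
        {α : QuaternionAlgebra ℚ c₁ 0 c₂ | α ∈ L ∧ ∃ m : ℕ, 1 ≤ m ∧ m ≤ L₀ ∧
          α * star α = (m : QuaternionAlgebra ℚ c₁ 0 c₂) ∧
          ∃ g : GL(2, ℝ)⁺, (↑(↑g : GL (Fin 2) ℝ) : Matrix (Fin 2) (Fin 2) ℝ) = ι α ∧
            dist z (g • z) ≤ δ},
      x ∈ Submodule.span ℚ
        {α : QuaternionAlgebra ℚ c₁ 0 c₂ | α ∈ L ∧ ∃ m : ℕ, 1 ≤ m ∧ m ≤ L₀ ^ 2 ∧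
          α * star α = (m : QuaternionAlgebra ℚ c₁ 0 c₂) ∧
          ∃ g : GL(2, ℝ)⁺, (↑(↑g : GL (Fin 2) ℝ) : Matrix (Fin 2) (Fin 2) ℝ) = ι α ∧
            dist z (g • z) ≤ 2 * δ} := by
  change ∀ x ∈ Algebra.adjoin ℚ (normDisplacementSet L ι z L₀ δ),
    x ∈ Submodule.span ℚ (normDisplacementSet L ι z (L₀ ^ 2) (2 * δ))
  have hsq : normDisplacementSet L ι z L₀ δ * normDisplacementSet L ι z L₀ δ ⊆
      normDisplacementSet L ι z (L₀ ^ 2) (2 * δ) := by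
    rintro _ ⟨a, ha, b, hb, rfl⟩
    rw [sq, two_mul]
    exact mul_mem_normDisplacementSet hmul ha hb
  intro x hx
  exact Submodule.span_mono hsq <| QuaternionAlgebra.adjoin_le_span_mul_self
    (one_mem_normDisplacementSet h1 hL₀ hδ.le) hx

set_option synthInstance.maxHeartbeats 400000 in
/-- Let `D` be an indefinite quaternion division algebra over `ℚ`, embedded in `M₂(ℝ)` via
`ι`, and let `L ⊆ D` be multiplicatively closed with `1 ∈ L`. Then the `ℚ`-algebra
generated by `⋃_{1 ≤ m ≤ L₀} L(m; z, δ)` is contained in the `ℚ`-span of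
`⋃_{1 ≤ m ≤ L₀²} L(m; z, 2δ)`, where `L(m; z, δ)` is the set of `α ∈ L` of reduced norm
`m` with `u(z, ι(α)z) ≤ δ`. -/
theorem stmt_4 (c₁ c₂ : ℚ)
    (hdiv : ∀ x : QuaternionAlgebra ℚ c₁ 0 c₂, x ≠ 0 → IsUnit x)
    (ι : QuaternionAlgebra ℚ c₁ 0 c₂ →+* Matrix (Fin 2) (Fin 2) ℝ)
    (hι : Function.Injective ι)
    (L : Set (QuaternionAlgebra ℚ c₁ 0 c₂))
    (h1 : (1 : QuaternionAlgebra ℚ c₁ 0 c₂) ∈ L)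
    (hmul : ∀ x ∈ L, ∀ y ∈ L, x * y ∈ L)
    (z : UpperHalfPlane) (L₀ : ℕ) (hL₀ : 0 < L₀) (δ : ℝ) (hδ : 0 < δ) :
    ∀ x ∈ Algebra.adjoin ℚ
        {α : QuaternionAlgebra ℚ c₁ 0 c₂ | α ∈ L ∧ ∃ m : ℕ, 1 ≤ m ∧ m ≤ L₀ ∧
          α * star α = (m : QuaternionAlgebra ℚ c₁ 0 c₂) ∧
          ∃ g : GL(2, ℝ)⁺, (↑(↑g : GL (Fin 2) ℝ) : Matrix (Fin 2) (Fin 2) ℝ) = ι α ∧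
            dist z (g • z) ≤ δ},
      x ∈ Submodule.span ℚ
        {α : QuaternionAlgebra ℚ c₁ 0 c₂ | α ∈ L ∧ ∃ m : ℕ, 1 ≤ m ∧ m ≤ L₀ ^ 2 ∧
          α * star α = (m : QuaternionAlgebra ℚ c₁ 0 c₂) ∧
          ∃ g : GL(2, ℝ)⁺, (↑(↑g : GL (Fin 2) ℝ) : Matrix (Fin 2) (Fin 2) ℝ) = ι α ∧
            dist z (g • z) ≤ 2 * δ} :=
  stmt_4_general c₁ c₂ ι L h1 hmul z L₀ hL₀ δ hδ
end

section
/- Let L ⊆ R² be a lattice and D ⊂ R² a disc of radius R. If λ_1 is the length of the shortest nonzero vector of L and d is the covolume of L, then the number of lattice points of L in D is O(1 + R/λ_1 + R²/d), with an absolute implied constant. -/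
/-! Let `u` be a shortest nonzero vector of the lattice `L`, `λ = ‖u‖`, and `d` the covolume.
For `x ∈ L` the area form `ω u x` lies in `dℤ`, and if `ω u x = 0` then `x` is parallel to `u`,
so `|⟪u, x⟫| = λ‖x‖ ≥ λ²` unless `x = 0`. Hence distinct lattice points of the disc differ by at
least `1` in `ω u x / d` or in `⟪u, x⟫ / λ²`; these coordinates range over intervals of lengths
`2λR/d` and `2R/λ`, so their floors inject the points into a box of `(2λR/d + 2)(2R/λ + 2)`
integer points. If the disc holds two lattice points then `λ ≤ 2R`, which turns the cross term
`λR/d` into `O(R²/d)`. -/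

open Module Metric Submodule

theorem Int.card_Icc_floor_floor_le {a b : ℝ} (h : a ≤ b) :
    ((Finset.Icc ⌊a⌋ ⌊b⌋).card : ℝ) ≤ b - a + 2 := by
  have hab : ⌊a⌋ ≤ ⌊b⌋ := Int.floor_le_floor h
  rw [Int.card_Icc, ← Int.cast_natCast, Int.toNat_of_nonneg (by omega)]
  push_cast
  linarith [Int.floor_le b, Int.lt_floor_add_one a]

theorem Set.ncard_le_of_separated {α : Type*} {S : Set α} (f g : α → ℝ) {a b s t : ℝ}
    (hs : 0 ≤ s) (ht : 0 ≤ t) (hf : ∀ x ∈ S, |f x - a| ≤ s) (hg : ∀ x ∈ S, |g x - b| ≤ t)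
    (hsep : ∀ x ∈ S, ∀ y ∈ S, x ≠ y → 1 ≤ |f x - f y| ∨ 1 ≤ |g x - g y|) :
    (S.ncard : ℝ) ≤ (2 * s + 2) * (2 * t + 2) := by
  set box := Finset.Icc ⌊a - s⌋ ⌊a + s⌋ ×ˢ Finset.Icc ⌊b - t⌋ ⌊b + t⌋
  have hmaps : ∀ x ∈ S, (⌊f x⌋, ⌊g x⌋) ∈ (box : Set (ℤ × ℤ)) := by
    intro x hx
    obtain ⟨hf₁, hf₂⟩ := abs_le.mp (hf x hx)
    obtain ⟨hg₁, hg₂⟩ := abs_le.mp (hg x hx)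
    simp only [box, Finset.coe_product, Set.mem_prod, Finset.coe_Icc, Set.mem_Icc]
    exact ⟨⟨Int.floor_le_floor (by linarith), Int.floor_le_floor (by linarith)⟩,
      Int.floor_le_floor (by linarith), Int.floor_le_floor (by linarith)⟩
  have hinj : Set.InjOn (fun x => (⌊f x⌋, ⌊g x⌋)) S := by
    intro x hx y hy hxy
    obtain ⟨hfxy, hgxy⟩ := Prod.mk.inj hxy
    by_contra hne
    rcases hsep x hx y hy hne with h | h
    · exact (Int.abs_sub_lt_one_of_floor_eq_floor hfxy).not_ge h
    · exact (Int.abs_sub_lt_one_of_floor_eq_floor hgxy).not_ge h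
  calc (S.ncard : ℝ) ≤ box.card := by
        rw [← Set.ncard_coe_finset]
        exact_mod_cast Set.ncard_le_ncard_of_injOn _ hmaps hinj box.finite_toSet
    _ = (Finset.Icc ⌊a - s⌋ ⌊a + s⌋).card * (Finset.Icc ⌊b - t⌋ ⌊b + t⌋).card := by
        rw [Finset.card_product, Nat.cast_mul]
    _ ≤ (a + s - (a - s) + 2) * (b + t - (b - t) + 2) :=
        mul_le_mul (Int.card_Icc_floor_floor_le (by linarith))
          (Int.card_Icc_floor_floor_le (by linarith)) (by positivity) (by linarith)
    _ = (2 * s + 2) * (2 * t + 2) := by ring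

theorem exists_ne_norm_sub_le_of_one_lt_ncard {E : Type*} [SeminormedAddCommGroup E]
    {S : Set E} {p : E} {R : ℝ} (hS : S ⊆ closedBall p R) (h : 1 < S.ncard) :
    ∃ x ∈ S, ∃ y ∈ S, x ≠ y ∧ ‖x - y‖ ≤ 2 * R := by
  obtain ⟨x, y, hx, hy, hne⟩ := (Set.one_lt_ncard_iff (Set.finite_of_ncard_pos (by omega))).mp h
  refine ⟨x, hx, y, hy, hne, ?_⟩
  rw [← dist_eq_norm, two_mul]
  exact (dist_triangle_right x y p).trans (add_le_add (hS hx) (hS hy))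

namespace Orientation

variable {E : Type*} [NormedAddCommGroup E] [InnerProductSpace ℝ E] [Fact (finrank ℝ E = 2)]
  (o : Orientation ℝ E (Fin 2))

local notation "ω" => o.areaForm

open scoped RealInnerProductSpace

theorem areaForm_ne_zero_of_linearIndependent {v w : E} (h : LinearIndependent ℝ ![v, w]) :
    ω v w ≠ 0 := by
  let b := o.finOrthonormalBasis two_pos Fact.out
  have hspan : span ℝ (Set.range ![v, w]) = ⊤ :=
    h.span_eq_top_of_card_eq_finrank (by simp [(Fact.out : finrank ℝ E = 2)])
  rw [areaForm_to_volumeForm, o.volumeForm_robust b (o.finOrthonormalBasis_orientation _ _)]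
  exact (b.toBasis.is_basis_iff_det.mp ⟨h, hspan⟩).ne_zero

theorem areaForm_mem_zmultiples_of_mem_span_pair {v w x y : E}
    (hx : x ∈ span ℤ {v, w}) (hy : y ∈ span ℤ {v, w}) :
    ∃ k : ℤ, ω x y = k * ω v w := by
  obtain ⟨a, b, rfl⟩ := mem_span_pair.mp hx
  obtain ⟨c, d, rfl⟩ := mem_span_pair.mp hy
  refine ⟨a * d - b * c, ?_⟩
  simp only [map_add, map_zsmul, LinearMap.add_apply, LinearMap.smul_apply, areaForm_apply_self,
    zsmul_eq_mul, o.areaForm_swap w v]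
  push_cast
  ring

theorem abs_inner_eq_of_areaForm_eq_zero {u x : E} (h : ω u x = 0) :
    |⟪u, x⟫| = ‖u‖ * ‖x‖ := by
  have := o.inner_sq_add_areaForm_sq u x
  rw [h, zero_pow two_ne_zero, add_zero, ← mul_pow] at this
  rw [← abs_of_nonneg (by positivity : 0 ≤ ‖u‖ * ‖x‖)]
  exact sq_eq_sq_iff_abs_eq_abs _ _ |>.mp this

theorem ncard_inter_closedBall_le_mul {L : Submodule ℤ E} {D : ℝ} (hD : D ≠ 0)
    (hL : ∀ x ∈ L, ∀ y ∈ L, ∃ k : ℤ, ω x y = k * D)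
    {u : E} (hu : u ∈ L) (hu0 : u ≠ 0) (hmin : ∀ x ∈ L, x ≠ 0 → ‖u‖ ≤ ‖x‖)
    (p : E) {R : ℝ} (hR : 0 ≤ R) :
    (((L : Set E) ∩ closedBall p R).ncard : ℝ) ≤
      (2 * (‖u‖ * R / |D|) + 2) * (2 * (R / ‖u‖) + 2) := by
  have hu_pos : 0 < ‖u‖ := norm_pos_iff.mpr hu0
  have hD_pos : 0 < |D| := abs_pos.mpr hD
  refine Set.ncard_le_of_separated (fun x => ω u x / |D|) (fun x => ⟪u, x⟫ / ‖u‖ ^ 2)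
    (a := ω u p / |D|) (b := ⟪u, p⟫ / ‖u‖ ^ 2) (by positivity) (by positivity) ?_ ?_ ?_
  · rintro x ⟨-, hx⟩
    rw [← sub_div, ← map_sub, abs_div, abs_of_pos hD_pos]
    gcongr
    exact (o.abs_areaForm_le u (x - p)).trans (by gcongr; exact mem_closedBall_iff_norm.mp hx)
  · rintro x ⟨-, hx⟩
    rw [← sub_div, ← inner_sub_right, abs_div, abs_of_pos (pow_pos hu_pos 2),
      div_le_iff₀ (pow_pos hu_pos 2)]
    calc |⟪u, x - p⟫| ≤ ‖u‖ * ‖x - p‖ := abs_real_inner_le_norm u (x - p)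
      _ ≤ ‖u‖ * R := by gcongr; exact mem_closedBall_iff_norm.mp hx
      _ = R / ‖u‖ * ‖u‖ ^ 2 := by field_simp
  · rintro x ⟨hx, -⟩ y ⟨hy, -⟩ hne
    have hxy : x - y ∈ L := L.sub_mem hx hy
    obtain ⟨k, hk⟩ := hL u hu (x - y) hxy
    rw [← sub_div, ← sub_div, ← map_sub, ← inner_sub_right]
    by_cases hk0 : k = 0
    · right
      rw [hk0, Int.cast_zero, zero_mul] at hk
      rw [abs_div, abs_of_pos (pow_pos hu_pos 2), le_div_iff₀ (pow_pos hu_pos 2), one_mul,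
        o.abs_inner_eq_of_areaForm_eq_zero hk, sq]
      gcongr
      exact hmin _ hxy (sub_ne_zero.mpr hne)
    · left
      rw [hk, abs_div, abs_mul, abs_abs, mul_div_assoc, div_self hD_pos.ne', mul_one]
      exact_mod_cast Int.one_le_abs hk0

theorem ncard_inter_closedBall_le {L : Submodule ℤ E} {D : ℝ} (hD : D ≠ 0)
    (hL : ∀ x ∈ L, ∀ y ∈ L, ∃ k : ℤ, ω x y = k * D)
    {u : E} (hu : u ∈ L) (hu0 : u ≠ 0) (hmin : ∀ x ∈ L, x ≠ 0 → ‖u‖ ≤ ‖x‖)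
    (p : E) {R : ℝ} (hR : 0 ≤ R) :
    (((L : Set E) ∩ closedBall p R).ncard : ℝ) ≤ 12 * (1 + R / ‖u‖ + R ^ 2 / |D|) := by
  have hcount := o.ncard_inter_closedBall_le_mul hD hL hu hu0 hmin p hR
  have hu_pos : 0 < ‖u‖ := norm_pos_iff.mpr hu0
  have hD_pos : 0 < |D| := abs_pos.mpr hD
  rcases le_or_gt ((L : Set E) ∩ closedBall p R).ncard 1 with h1 | h1
  · have : (0 : ℝ) ≤ R / ‖u‖ + R ^ 2 / |D| := by positivity
    have : (((L : Set E) ∩ closedBall p R).ncard : ℝ) ≤ 1 := by exact_mod_cast h1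
    linarith
  obtain ⟨x, hx, y, hy, hne, hxy⟩ :=
    exists_ne_norm_sub_le_of_one_lt_ncard Set.inter_subset_right h1
  have hu2R : ‖u‖ ≤ 2 * R := (hmin _ (L.sub_mem hx.1 hy.1) (sub_ne_zero.mpr hne)).trans hxy
  have hprod : ‖u‖ * R / |D| * (R / ‖u‖) = R ^ 2 / |D| := by field_simp
  have hcross : ‖u‖ * R / |D| ≤ 2 * (R ^ 2 / |D|) := by
    rw [← mul_div_assoc]
    exact div_le_div_of_nonneg_right (by nlinarith) hD_pos.le
  nlinarith

end Orientation

instance : Fact (finrank ℝ (EuclideanSpace ℝ (Fin 2)) = 2) := ⟨finrank_euclideanSpace_fin⟩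

theorem EuclideanSpace.abs_areaForm_eq (o : Orientation ℝ (EuclideanSpace ℝ (Fin 2)) (Fin 2))
    (v w : EuclideanSpace ℝ (Fin 2)) : |o.areaForm v w| = |v 0 * w 1 - v 1 * w 0| := by
  rw [o.areaForm_to_volumeForm, o.volumeForm_robust' (EuclideanSpace.basisFun (Fin 2) ℝ),
    Basis.det_apply, Matrix.det_fin_two]
  simp only [Basis.toMatrix_apply, OrthonormalBasis.coe_toBasis_repr_apply,
    EuclideanSpace.basisFun_repr, Matrix.cons_val_zero, Matrix.cons_val_one]
  congr 1
  ring

/-- Lattice point count in a disc: if `L ⊆ ℝ²` is a lattice with shortest nonzero vector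
of length `λ₁` and covolume `d`, and `D` is a disc of radius `R`, then
`|L ∩ D| = O(1 + R/λ₁ + R²/d)` with an absolute implied constant. -/
theorem stmt_7 :
    ∃ C : ℝ, 0 < C ∧
      ∀ (v w p : EuclideanSpace ℝ (Fin 2)) (R lam d : ℝ),
        LinearIndependent ℝ ![v, w] → 0 ≤ R →
        (∀ x ∈ Submodule.span ℤ ({v, w} : Set (EuclideanSpace ℝ (Fin 2))),
          x ≠ 0 → lam ≤ ‖x‖) →
        (∃ x ∈ Submodule.span ℤ ({v, w} : Set (EuclideanSpace ℝ (Fin 2))),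
          x ≠ 0 ∧ ‖x‖ = lam) →
        d = |v 0 * w 1 - v 1 * w 0| →
        (({x : EuclideanSpace ℝ (Fin 2) |
            x ∈ Submodule.span ℤ ({v, w} : Set (EuclideanSpace ℝ (Fin 2))) ∧
            ‖x - p‖ ≤ R}).ncard : ℝ) ≤ C * (1 + R / lam + R ^ 2 / d) := by
  refine ⟨12, by norm_num, ?_⟩
  rintro v w p R _ _ hind hR hmin ⟨u, hu, hu0, rfl⟩ rfl
  let o := (EuclideanSpace.basisFun (Fin 2) ℝ).toBasis.orientation
  have hS : {x | x ∈ span ℤ {v, w} ∧ ‖x - p‖ ≤ R} =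
      (span ℤ {v, w} : Set (EuclideanSpace ℝ (Fin 2))) ∩ closedBall p R := by
    ext; simp [dist_eq_norm]
  rw [hS, ← EuclideanSpace.abs_areaForm_eq o]
  exact o.ncard_inter_closedBall_le (o.areaForm_ne_zero_of_linearIndependent hind)
    (fun x hx y hy => o.areaForm_mem_zmultiples_of_mem_span_pair hx hy) hu hu0 hmin p hR
end
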